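/- arXiv:2104.00913 — 5 statements merged into one kernel-verified Lean document; each statement's English description precedes it below -/
import Mathlib

section
/- Let K be a field, let p ≥ 2 and n ≥ p, and let f_1,…,f_{p−1} ∈ K[z_1,…,z_n] have total degree at most d. Let J be the (p−1)×n Jacobian matrix with entries ∂f_i/∂z_k, regarded over the rational function field K(z_1,…,z_n), and suppose the (p−1)×(p−1) submatrix formed by the first p−1 columns of J is invertible over K(z_1,…,z_n); denote by δ ∈ K[z_1,…,z_n] its determinant. Then the kernel of J, as a K(z_1,…,z_n)-subspace of K(z_1,…,z_n)^n, has dimension n−p+1 and admits a basis B_1,…,B_{n−p+1} such that every entry of every B_i can be written as a quotient u/δ where u ∈ K[z_1,…,z_n] has total degree at most (p−1)(d−1) and δ (which also has total degree at most (p−1)(d−1)) is the common denominator. -/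
open MvPolynomial

/-- The Jacobian matrix of `f_1, …, f_q ∈ K[z_1,…,z_n]`, viewed over the rational
function field `K(z_1,…,z_n)`. -/
noncomputable def jacobianFF {K : Type*} [Field K] {q n : ℕ}
    (f : Fin q → MvPolynomial (Fin n) K) :
    Matrix (Fin q) (Fin n) (FractionRing (MvPolynomial (Fin n) K)) :=
  Matrix.of fun i k =>
    algebraMap (MvPolynomial (Fin n) K) (FractionRing (MvPolynomial (Fin n) K))
      (MvPolynomial.pderiv k (f i))

/-- The determinant `δ ∈ K[z_1,…,z_n]` of the square submatrix of the Jacobian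
matrix formed by its first `q` columns. -/
noncomputable def jacSubDet {K : Type*} [Field K] {q n : ℕ} (hqn : q ≤ n)
    (f : Fin q → MvPolynomial (Fin n) K) : MvPolynomial (Fin n) K :=
  Matrix.det (Matrix.of fun i j : Fin q => MvPolynomial.pderiv (Fin.castLE hqn j) (f i))

/-! Write the Jacobian as `J = [L | T]`, where `L` is the leading `(p-1)×(p-1)` block and
`δ = det L ≠ 0`. For each trailing column `j`, Cramer's rule gives the polynomial vector
`(-cramer L (T eⱼ), δ eⱼ)` in the kernel of `J`; its entries are `0`, `δ` or `(p-1)×(p-1)` minors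
of `J`, hence of degree at most `(p-1)(d-1)`. After division by `δ` these vectors restrict to the
standard basis on the trailing coordinates, and this restriction is injective on the kernel
because `L` is invertible, so they form a basis of the kernel. -/

namespace MvPolynomial

variable {R σ : Type*}

theorem totalDegree_pderiv_le [CommSemiring R] [DecidableEq σ] (i : σ) (p : MvPolynomial σ R) :
    (pderiv i p).totalDegree ≤ p.totalDegree - 1 := by
  refine Finset.sup_le fun m hm => ?_
  have hmem : m + Finsupp.single i 1 ∈ p.support := by
    rw [mem_support_iff, coeff_pderiv] at hm
    exact mem_support_iff.mpr (left_ne_zero_of_mul hm)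
  have := le_totalDegree hmem
  rw [Finsupp.sum_add_index' (fun _ => rfl) (fun _ _ _ => rfl),
    Finsupp.sum_single_index rfl] at this
  omega

theorem totalDegree_det_le [CommRing R] {ι : Type*} [Fintype ι] [DecidableEq ι]
    (M : Matrix ι ι (MvPolynomial σ R)) {D : ℕ} (h : ∀ i j, (M i j).totalDegree ≤ D) :
    M.det.totalDegree ≤ Fintype.card ι * D := by
  rw [Matrix.det_apply]
  refine (totalDegree_finsetSum _ _).trans (Finset.sup_le fun τ _ => ?_)
  calc (Equiv.Perm.sign τ • ∏ i, M (τ i) i).totalDegree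
      ≤ (∏ i, M (τ i) i).totalDegree := totalDegree_smul_le _ _
    _ ≤ ∑ i, (M (τ i) i).totalDegree := totalDegree_finsetProd _ _
    _ ≤ ∑ _i : ι, D := Finset.sum_le_sum fun i _ => h _ _
    _ = Fintype.card ι * D := by simp

end MvPolynomial

namespace Matrix

variable {κ μ ι R F : Type*} [Fintype κ]

section CommRing

variable [CommRing R] (e : κ ⊕ μ ≃ ι)

def leadingBlock (A : Matrix κ ι R) : Matrix κ κ R := A.submatrix id (e ∘ Sum.inl)

def trailingBlock (A : Matrix κ ι R) : Matrix κ μ R := A.submatrix id (e ∘ Sum.inr)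

theorem mulVec_eq_leadingBlock_add_trailingBlock [Fintype μ] [Fintype ι] (A : Matrix κ ι R)
    (v : ι → R) :
    A *ᵥ v = leadingBlock e A *ᵥ (v ∘ e ∘ Sum.inl) + trailingBlock e A *ᵥ (v ∘ e ∘ Sum.inr) := by
  have hcols : A.submatrix id e = fromCols (leadingBlock e A) (trailingBlock e A) := by
    ext i (j | j) <;> rfl
  calc A *ᵥ v = A.submatrix id e *ᵥ (v ∘ e) := by
        rw [submatrix_mulVec_equiv, Function.comp_assoc, e.self_comp_symm]; rfl
    _ = _ := by rw [hcols, fromCols_mulVec]; rfl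

variable [DecidableEq κ] [DecidableEq μ]

/-- `det L • (-L⁻¹ T eⱼ, eⱼ)` in the coordinates given by `e`, with `L⁻¹` replaced by Cramer's
rule so that it makes sense over any commutative ring. -/
def kernelVec (A : Matrix κ ι R) (j : μ) : ι → R :=
  Sum.elim (-cramer (leadingBlock e A) ((trailingBlock e A).col j))
    (Pi.single j (leadingBlock e A).det) ∘ e.symm

theorem kernelVec_comp_equiv (A : Matrix κ ι R) (j : μ) :
    kernelVec e A j ∘ e =
      Sum.elim (-cramer (leadingBlock e A) ((trailingBlock e A).col j))
        (Pi.single j (leadingBlock e A).det) := by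
  simp [kernelVec, Function.comp_assoc]

@[simp]
theorem kernelVec_apply_inl (A : Matrix κ ι R) (j : μ) (i : κ) :
    kernelVec e A j (e (Sum.inl i)) = -cramer (leadingBlock e A) ((trailingBlock e A).col j) i := by
  simp [kernelVec]

@[simp]
theorem kernelVec_apply_inr (A : Matrix κ ι R) (j i : μ) :
    kernelVec e A j (e (Sum.inr i)) = (Pi.single j (leadingBlock e A).det : μ → R) i := by
  simp [kernelVec]

theorem mulVec_kernelVec [Fintype μ] [Fintype ι] (A : Matrix κ ι R) (j : μ) :
    A *ᵥ kernelVec e A j = 0 := by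
  simp only [mulVec_eq_leadingBlock_add_trailingBlock e, ← Function.comp_assoc,
    kernelVec_comp_equiv, Sum.elim_comp_inl, Sum.elim_comp_inr, mulVec_neg, mulVec_cramer,
    mulVec_single]
  ext i
  simp

theorem cramer_map {S : Type*} [CommRing S] (φ : R →+* S) (M : Matrix κ κ R) (b : κ → R) :
    (M.map φ).cramer (φ ∘ b) = φ ∘ M.cramer b := by
  ext i
  simp [cramer_apply, ← map_updateCol, RingHom.map_det]

theorem kernelVec_map {S : Type*} [CommRing S] (φ : R →+* S) (A : Matrix κ ι R) (j : μ) :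
    kernelVec e (A.map φ) j = φ ∘ kernelVec e A j := by
  have hL : leadingBlock e (A.map φ) = (leadingBlock e A).map φ := rfl
  have hT : (trailingBlock e (A.map φ)).col j = φ ∘ (trailingBlock e A).col j := rfl
  rw [kernelVec, hL, hT, cramer_map, ← RingHom.mapMatrix_apply, ← RingHom.map_det, kernelVec,
    ← Function.comp_assoc]
  congr 1
  ext (i | i) <;> simp [Pi.single_apply, apply_ite φ]

end CommRing

section Field

variable [Field F] (e : κ ⊕ μ ≃ ι) [Fintype μ] [Fintype ι]

def trailingCoords (A : Matrix κ ι F) : LinearMap.ker A.mulVecLin →ₗ[F] μ → F :=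
  (LinearMap.funLeft F F (e ∘ Sum.inr)).comp (LinearMap.ker A.mulVecLin).subtype

variable [DecidableEq κ]

theorem eq_zero_of_mulVec_eq_zero_of_comp_inr_eq_zero {A : Matrix κ ι F}
    (hA : (leadingBlock e A).det ≠ 0) {v : ι → F} (hv : A *ᵥ v = 0)
    (hinr : v ∘ e ∘ Sum.inr = 0) : v = 0 := by
  rw [mulVec_eq_leadingBlock_add_trailingBlock e, hinr, mulVec_zero, add_zero] at hv
  have hinl := eq_zero_of_mulVec_eq_zero hA hv
  have hve : v ∘ e = 0 := by
    ext (i | i)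
    exacts [congrFun hinl i, congrFun hinr i]
  funext k
  simpa using congrFun hve (e.symm k)

theorem trailingCoords_injective {A : Matrix κ ι F} (hA : (leadingBlock e A).det ≠ 0) :
    Function.Injective (trailingCoords e A) := by
  rw [← LinearMap.ker_eq_bot, LinearMap.ker_eq_bot']
  rintro ⟨v, hv⟩ hinr
  exact Subtype.ext (eq_zero_of_mulVec_eq_zero_of_comp_inr_eq_zero e hA hv hinr)

variable [DecidableEq μ]

theorem smul_kernelVec_mem_ker (A : Matrix κ ι F) (j : μ) :
    (leadingBlock e A).det⁻¹ • kernelVec e A j ∈ LinearMap.ker A.mulVecLin := by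
  simp [mulVec_kernelVec]

theorem trailingCoords_smul_kernelVec {A : Matrix κ ι F} (hA : (leadingBlock e A).det ≠ 0)
    (j : μ) :
    trailingCoords e A ⟨(leadingBlock e A).det⁻¹ • kernelVec e A j, smul_kernelVec_mem_ker e A j⟩ =
      Pi.single j 1 := by
  ext i
  simp [trailingCoords, LinearMap.funLeft, Pi.single_apply, apply_ite, hA]

theorem trailingCoords_surjective {A : Matrix κ ι F} (hA : (leadingBlock e A).det ≠ 0) :
    Function.Surjective (trailingCoords e A) := by
  rw [← LinearMap.range_eq_top, eq_top_iff, ← (Pi.basisFun F μ).span_eq, Submodule.span_le]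
  rintro _ ⟨j, rfl⟩
  exact ⟨_, by simpa using trailingCoords_smul_kernelVec e hA j⟩

noncomputable def kernelBasis (A : Matrix κ ι F) (hA : (leadingBlock e A).det ≠ 0) :
    Module.Basis μ F (LinearMap.ker A.mulVecLin) :=
  (Pi.basisFun F μ).map (LinearEquiv.ofBijective (trailingCoords e A)
    ⟨trailingCoords_injective e hA, trailingCoords_surjective e hA⟩).symm

theorem coe_kernelBasis {A : Matrix κ ι F} (hA : (leadingBlock e A).det ≠ 0) (j : μ) :
    (kernelBasis e A hA j : ι → F) = (leadingBlock e A).det⁻¹ • kernelVec e A j := by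
  suffices kernelBasis e A hA j =
      ⟨(leadingBlock e A).det⁻¹ • kernelVec e A j, smul_kernelVec_mem_ker e A j⟩ from
    congrArg Subtype.val this
  apply trailingCoords_injective e hA
  rw [trailingCoords_smul_kernelVec e hA]
  simp only [kernelBasis, Module.Basis.map_apply, Pi.basisFun_apply]
  exact (LinearEquiv.ofBijective (trailingCoords e A) _).apply_symm_apply _

end Field

section MvPolynomial

variable {σ : Type*} [CommRing R] [DecidableEq κ] [DecidableEq μ] (e : κ ⊕ μ ≃ ι)

theorem totalDegree_kernelVec_le {A : Matrix κ ι (MvPolynomial σ R)} {D : ℕ}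
    (hA : ∀ i k, (A i k).totalDegree ≤ D) (j : μ) (k : ι) :
    (kernelVec e A j k).totalDegree ≤ Fintype.card κ * D := by
  have hL : ∀ i i', (leadingBlock e A i i').totalDegree ≤ D := fun _ _ => hA _ _
  obtain ⟨i | i, rfl⟩ := e.surjective k
  · rw [kernelVec_apply_inl, totalDegree_neg, cramer_apply]
    refine totalDegree_det_le _ fun a b => ?_
    rw [updateCol_apply]
    split_ifs
    exacts [hA _ _, hL _ _]
  · rw [kernelVec_apply_inr, Pi.single_apply]
    split_ifs
    exacts [totalDegree_det_le _ hL, by simp]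

end MvPolynomial

end Matrix

section Jacobian

variable {K : Type*} [Field K] {q n : ℕ}

noncomputable def jacobianMatrix (f : Fin q → MvPolynomial (Fin n) K) :
    Matrix (Fin q) (Fin n) (MvPolynomial (Fin n) K) :=
  Matrix.of fun i k => pderiv k (f i)

theorem totalDegree_jacobianMatrix_le {f : Fin q → MvPolynomial (Fin n) K} {d : ℕ}
    (hdeg : ∀ i, (f i).totalDegree ≤ d) (i : Fin q) (k : Fin n) :
    (jacobianMatrix f i k).totalDegree ≤ d - 1 :=
  (totalDegree_pderiv_le k (f i)).trans (Nat.sub_le_sub_right (hdeg i) 1)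

theorem jacobianFF_eq_map (f : Fin q → MvPolynomial (Fin n) K) :
    jacobianFF f = (jacobianMatrix f).map (algebraMap _ (FractionRing (MvPolynomial (Fin n) K))) :=
  rfl

end Jacobian

/-- if `f_1,…,f_{p-1} ∈ K[z_1,…,z_n]` have degree at most `d` and the
submatrix of the Jacobian formed by the first `p-1` columns is invertible over
`K(z_1,…,z_n)` (equivalently, its determinant `δ` is nonzero), then the kernel of the
Jacobian has dimension `n-p+1` and admits a basis whose entries are quotients `u/δ`
with `deg u ≤ (p-1)(d-1)`; moreover `deg δ ≤ (p-1)(d-1)`. -/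
theorem jacobian_kernel_basis_degree_bound {K : Type*} [Field K]
    (p n d : ℕ) (hp : 2 ≤ p) (hn : p ≤ n)
    (f : Fin (p - 1) → MvPolynomial (Fin n) K)
    (hdeg : ∀ i, (f i).totalDegree ≤ d)
    (hδ : jacSubDet (le_trans (Nat.sub_le p 1) hn) f ≠ 0) :
    Module.finrank (FractionRing (MvPolynomial (Fin n) K))
        (LinearMap.ker (Matrix.mulVecLin (jacobianFF f))) = n - p + 1 ∧
    (jacSubDet (le_trans (Nat.sub_le p 1) hn) f).totalDegree ≤ (p - 1) * (d - 1) ∧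
    ∃ B : Module.Basis (Fin (n - p + 1)) (FractionRing (MvPolynomial (Fin n) K))
        (LinearMap.ker (Matrix.mulVecLin (jacobianFF f))),
      ∀ (i : Fin (n - p + 1)) (k : Fin n),
        ∃ u : MvPolynomial (Fin n) K, u.totalDegree ≤ (p - 1) * (d - 1) ∧
          (B i : Fin n → FractionRing (MvPolynomial (Fin n) K)) k =
            algebraMap (MvPolynomial (Fin n) K) (FractionRing (MvPolynomial (Fin n) K)) u /
              algebraMap (MvPolynomial (Fin n) K) (FractionRing (MvPolynomial (Fin n) K))
                (jacSubDet (le_trans (Nat.sub_le p 1) hn) f) := by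
  set hqn := le_trans (Nat.sub_le p 1) hn
  set e := finSumFinEquiv.trans (finCongr (Nat.add_sub_cancel' hqn))
  set φ := algebraMap (MvPolynomial (Fin n) K) (FractionRing (MvPolynomial (Fin n) K))
  -- `e (Sum.inl j)` and `Fin.castLE hqn j` are both `⟨j, _⟩`
  have hdet : (Matrix.leadingBlock e (jacobianMatrix f)).det = jacSubDet hqn f := rfl
  have hdetF : (Matrix.leadingBlock e ((jacobianMatrix f).map φ)).det = φ (jacSubDet hqn f) := by
    rw [← hdet, RingHom.map_det]; rfl
  have hφδ : φ (jacSubDet hqn f) ≠ 0 :=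
    (map_ne_zero_iff _ (IsFractionRing.injective _ _)).mpr hδ
  have hJdeg := totalDegree_jacobianMatrix_le hdeg
  have hcard : n - (p - 1) = n - p + 1 := by omega
  rw [jacobianFF_eq_map]
  let B := (Matrix.kernelBasis e _ (hdetF ▸ hφδ)).reindex (finCongr hcard)
  refine ⟨by rw [Module.finrank_eq_card_basis B, Fintype.card_fin], ?_, B,
    fun i k => ⟨Matrix.kernelVec e (jacobianMatrix f) ((finCongr hcard).symm i) k, ?_, ?_⟩⟩
  · rw [← hdet]
    exact (totalDegree_det_le _ fun i j => hJdeg i _).trans_eq (by rw [Fintype.card_fin])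
  · simpa using Matrix.totalDegree_kernelVec_le e hJdeg _ k
  · rw [Module.Basis.reindex_apply, Matrix.coe_kernelBasis, hdetF, Matrix.kernelVec_map]
    simp [div_eq_inv_mul]
end

section
/- Let f = z_1^4 + (z_1 z_2 − 1)^2 ∈ ℂ[z_1, z_2], viewed as a polynomial mapping ℂ^2 → ℂ (so p = 1 and κ(df(x)) = ‖∇f(x)‖). Then 0 is an asymptotic critical value of f: there exists a sequence (x_t)_{t∈ℕ} in ℂ^2 such that ‖x_t‖ → ∞, f(x_t) → 0 and ‖x_t‖·‖∇f(x_t)‖ → 0. -/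
open MvPolynomial Filter

/-- Euclidean norm on `ℂ^m`. -/
noncomputable def eucNorm {m : ℕ} (v : Fin m → ℂ) : ℝ :=
  Real.sqrt (∑ k, ‖v k‖ ^ 2)

/-- The set of asymptotic critical values of a polynomial map `f : ℂ^n → ℂ`
(the case `p = 1`, where the Kuo distance `κ(df(x))` is the Euclidean norm of the
gradient `∇f(x)`). -/
def Kinf1 {n : ℕ} (f : MvPolynomial (Fin n) ℂ) : Set ℂ :=
  { c | ∃ x : ℕ → (Fin n → ℂ),
      Tendsto (fun t => eucNorm (x t)) atTop atTop ∧
      Tendsto (fun t => MvPolynomial.eval (x t) f) atTop (nhds c) ∧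
      Tendsto (fun t => eucNorm (x t) *
        eucNorm (fun k => MvPolynomial.eval (x t) (MvPolynomial.pderiv k f)))
        atTop (nhds 0) }

/-- `0` is an asymptotic critical value of
`f = z₁⁴ + (z₁z₂ − 1)² : ℂ² → ℂ`. -/
theorem zero_mem_Kinf_example :
    (0 : ℂ) ∈ Kinf1 ((X 0) ^ 4 + (X 0 * X 1 - 1) ^ 2 : MvPolynomial (Fin 2) ℂ) := by
  refine ⟨fun t => ![((t:ℂ)+1)⁻¹, (t:ℂ)+1], ?_, ?_, ?_⟩
  · -- norm tends to infinity
    have hA : Tendsto (fun t : ℕ => (t:ℝ)+1) atTop atTop :=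
      tendsto_atTop_add_const_right _ 1 tendsto_natCast_atTop_atTop
    refine tendsto_atTop_mono (fun t => ?_) hA
    have hnorm : ‖(t:ℂ)+1‖ = (t:ℝ)+1 := by
      rw [show ((t:ℂ)+1) = ((t+1:ℕ):ℂ) by push_cast; ring, Complex.norm_natCast]
      push_cast; ring
    have h1 : (0:ℝ) ≤ (t:ℝ)+1 := by positivity
    calc (t:ℝ)+1 = Real.sqrt (((t:ℝ)+1)^2) := (Real.sqrt_sq h1).symm
      _ ≤ eucNorm (![((t:ℂ)+1)⁻¹, (t:ℂ)+1]) := by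
          unfold eucNorm
          apply Real.sqrt_le_sqrt
          rw [Fin.sum_univ_two]
          simp only [Matrix.cons_val_zero, Matrix.cons_val_one, Matrix.head_cons, hnorm]
          nlinarith [sq_nonneg ‖((t:ℂ)+1)⁻¹‖]
  · -- f tends to 0
    have heval : ∀ t : ℕ, MvPolynomial.eval (![((t:ℂ)+1)⁻¹, (t:ℂ)+1])
        ((X 0) ^ 4 + (X 0 * X 1 - 1) ^ 2 : MvPolynomial (Fin 2) ℂ) = ((t:ℂ)+1)⁻¹ ^ 4 := by
      intro t
      have h : ((t:ℂ)+1) ≠ 0 := Nat.cast_add_one_ne_zero t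
      simp [eval_add, eval_pow, eval_mul, eval_X, inv_mul_cancel₀ h]
    simp only [heval]
    rw [tendsto_zero_iff_norm_tendsto_zero]
    have hnorm : ∀ t : ℕ, ‖((t:ℂ)+1)⁻¹ ^ 4‖ = (((t:ℝ)+1)⁻¹)^4 := by
      intro t
      rw [norm_pow, norm_inv, show ((t:ℂ)+1) = ((t+1:ℕ):ℂ) by push_cast; ring,
        Complex.norm_natCast]
      push_cast; ring
    simp only [hnorm]
    have : Tendsto (fun t : ℕ => ((t:ℝ)+1)⁻¹) atTop (nhds 0) :=
      tendsto_inv_atTop_zero.comp (tendsto_atTop_add_const_right _ 1 tendsto_natCast_atTop_atTop)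
    simpa using this.pow 4
  · -- product tends to 0
    have hpd : ∀ t : ℕ, (fun k => MvPolynomial.eval (![((t:ℂ)+1)⁻¹, (t:ℂ)+1])
        (pderiv k ((X 0) ^ 4 + (X 0 * X 1 - 1) ^ 2 : MvPolynomial (Fin 2) ℂ)))
        = ![4 * ((t:ℂ)+1)⁻¹ ^ 3, 0] := by
      intro t
      have h : ((t:ℂ)+1) ≠ 0 := Nat.cast_add_one_ne_zero t
      funext k
      fin_cases k <;>
        simp [pderiv_pow, pderiv_mul, pderiv_X, inv_mul_cancel₀ h]
    have hnorm : ∀ t : ℕ, ‖(t:ℂ)+1‖ = (t:ℝ)+1 := by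
      intro t
      rw [show ((t:ℂ)+1) = ((t+1:ℕ):ℂ) by push_cast; ring, Complex.norm_natCast]
      push_cast; ring
    have key : ∀ t : ℕ, eucNorm (![((t:ℂ)+1)⁻¹, (t:ℂ)+1]) *
        eucNorm (fun k => MvPolynomial.eval (![((t:ℂ)+1)⁻¹, (t:ℂ)+1])
          (pderiv k ((X 0) ^ 4 + (X 0 * X 1 - 1) ^ 2 : MvPolynomial (Fin 2) ℂ)))
        ≤ 8 * (((t:ℝ)+1)⁻¹)^2 := by
      intro t
      set a : ℝ := (t:ℝ)+1 with ha
      have ha1 : (1:ℝ) ≤ a := by simp [ha]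
      have ha0 : (0:ℝ) < a := lt_of_lt_of_le one_pos ha1
      have hn1 : eucNorm (![((t:ℂ)+1)⁻¹, (t:ℂ)+1]) ≤ 2 * a := by
        unfold eucNorm
        rw [show (2:ℝ) * a = Real.sqrt ((2*a)^2) by rw [Real.sqrt_sq (by positivity)]]
        apply Real.sqrt_le_sqrt
        rw [Fin.sum_univ_two]
        simp only [Matrix.cons_val_zero, Matrix.cons_val_one, Matrix.head_cons,
          norm_inv, hnorm]
        have hinv : a⁻¹ ≤ 1 := inv_le_one_of_one_le₀ ha1
        have h1 : a⁻¹^2 ≤ 1 := by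
          calc a⁻¹^2 ≤ 1^2 := by apply pow_le_pow_left₀ (by positivity) hinv
            _ = 1 := one_pow 2
        nlinarith [sq_nonneg a]
      have hn2 : eucNorm (fun k => MvPolynomial.eval (![((t:ℂ)+1)⁻¹, (t:ℂ)+1])
          (pderiv k ((X 0) ^ 4 + (X 0 * X 1 - 1) ^ 2 : MvPolynomial (Fin 2) ℂ)))
          = 4 * a⁻¹^3 := by
        rw [hpd t]
        unfold eucNorm
        rw [Fin.sum_univ_two]
        simp only [Matrix.cons_val_zero, Matrix.cons_val_one, Matrix.head_cons, norm_zero,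
          norm_mul, norm_pow, norm_inv, hnorm]
        rw [show ‖(4:ℂ)‖ = (4:ℝ) by norm_num,
          show (4 * (((t:ℝ)+1)⁻¹)^3)^2 + (0:ℝ)^2 = (4 * (((t:ℝ)+1)⁻¹)^3)^2 by ring]
        exact Real.sqrt_sq (by positivity)
      calc eucNorm (![((t:ℂ)+1)⁻¹, (t:ℂ)+1]) *
          eucNorm (fun k => MvPolynomial.eval (![((t:ℂ)+1)⁻¹, (t:ℂ)+1])
            (pderiv k ((X 0) ^ 4 + (X 0 * X 1 - 1) ^ 2 : MvPolynomial (Fin 2) ℂ)))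
          ≤ (2 * a) * (4 * a⁻¹^3) := by
            rw [hn2]
            exact mul_le_mul_of_nonneg_right hn1 (by positivity)
        _ = 8 * (a⁻¹)^2 := by field_simp; ring
    have hA : Tendsto (fun t : ℕ => (t:ℝ)+1) atTop atTop :=
      tendsto_atTop_add_const_right _ 1 tendsto_natCast_atTop_atTop
    have hlim : Tendsto (fun t : ℕ => 8 * (((t:ℝ)+1)⁻¹)^2) atTop (nhds 0) := by
      have : Tendsto (fun t : ℕ => ((t:ℝ)+1)⁻¹) atTop (nhds 0) :=
        tendsto_inv_atTop_zero.comp hA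
      simpa using (this.pow 2).const_mul 8
    exact squeeze_zero (fun t => mul_nonneg (Real.sqrt_nonneg _) (Real.sqrt_nonneg _)) key hlim
end

section
/- Let f = z_1^4 + (z_1 z_2 − 1)^2 ∈ ℂ[z_1, z_2], viewed as a polynomial mapping ℂ^2 → ℂ (so p = 1 and κ(df(x)) = ‖∇f(x)‖). Then the set of asymptotic critical values of f is exactly K_∞(f) = {0}. -/
/-!
Write `u = z₁z₂ - 1`, so that `f = z₁⁴ + u²`. Each product `zᵢ ∂ⱼf` is bounded by
`‖z‖ ‖∇f‖`, hence tends to `0` along a sequence witnessing `c ∈ K_∞(f)`. The Euler-type identity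
`z₁∂₁f + z₂∂₂f = 4f + 4u` then gives `u → -c`, and `z₂∂₂f = 2u(u + 1)` forces `c ∈ {0, 1}`.
If `c = 1`, then `u → -1`, and `z₁∂₂f = 2u z₁²`, `z₂∂₁f = 4z₁²(u + 1) + 2u z₂²` force `z → 0`,
contradicting `‖z‖ → ∞`. Conversely, on the hyperbola `z₁z₂ = 1` we have `f = z₁⁴` and
`∇f = (4z₁³, 0)`, so `‖z‖ ‖∇f‖ ≤ 4(|z₁|⁴ + |z₁|²) → 0` as `z₁ → 0`.
-/

open MvPolynomial Filter

open Topology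

section eucNorm

variable {m : ℕ}

lemma eucNorm_nonneg (v : Fin m → ℂ) : 0 ≤ eucNorm v := Real.sqrt_nonneg _

lemma eucNorm_sq (v : Fin m → ℂ) : eucNorm v ^ 2 = ∑ k, ‖v k‖ ^ 2 :=
  Real.sq_sqrt (Finset.sum_nonneg fun _ _ => sq_nonneg _)

lemma norm_le_eucNorm (v : Fin m → ℂ) (k : Fin m) : ‖v k‖ ≤ eucNorm v :=
  Real.le_sqrt_of_sq_le
    (Finset.single_le_sum (f := fun j => ‖v j‖ ^ 2) (fun _ _ => sq_nonneg _) (Finset.mem_univ k))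

lemma eucNorm_le_sum_norm (v : Fin m → ℂ) : eucNorm v ≤ ∑ k, ‖v k‖ :=
  Real.sqrt_le_iff.2 ⟨Finset.sum_nonneg fun _ _ => norm_nonneg _,
    Finset.sum_sq_le_sq_sum_of_nonneg fun _ _ => norm_nonneg _⟩

end eucNorm

lemma tendsto_coord_mul_eval_pderiv_zero {n : ℕ} {f : MvPolynomial (Fin n) ℂ}
    {x : ℕ → Fin n → ℂ}
    (h : Tendsto (fun t => eucNorm (x t) * eucNorm (fun k => eval (x t) (pderiv k f)))
      atTop (𝓝 0)) (i j : Fin n) :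
    Tendsto (fun t => x t i * eval (x t) (pderiv j f)) atTop (𝓝 0) := by
  refine tendsto_zero_iff_norm_tendsto_zero.2
    (squeeze_zero (fun _ => norm_nonneg _) (fun t => ?_) h)
  rw [norm_mul]
  exact mul_le_mul (norm_le_eucNorm _ i) (norm_le_eucNorm (fun k => eval (x t) (pderiv k f)) j)
    (norm_nonneg _) (eucNorm_nonneg _)

lemma Filter.Tendsto.of_mul_tendsto_ne_zero {α 𝕜 : Type*} [NormedField 𝕜] {l : Filter α}
    {w z : α → 𝕜} {w₀ : 𝕜}
    (hw : Tendsto w l (𝓝 w₀)) (hw₀ : w₀ ≠ 0) (hwz : Tendsto (fun t => w t * z t) l (𝓝 0)) :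
    Tendsto z l (𝓝 0) := by
  have hdiv := hwz.div hw hw₀
  rw [zero_div] at hdiv
  refine hdiv.congr' ?_
  filter_upwards [hw.eventually_ne hw₀] with t ht
  exact mul_div_cancel_left₀ (z t) ht

noncomputable abbrev examplePoly : MvPolynomial (Fin 2) ℂ := X 0 ^ 4 + (X 0 * X 1 - 1) ^ 2

@[simp] lemma eval_examplePoly (x : Fin 2 → ℂ) :
    eval x examplePoly = x 0 ^ 4 + (x 0 * x 1 - 1) ^ 2 := by
  simp

@[simp] lemma eval_pderiv_zero_examplePoly (x : Fin 2 → ℂ) :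
    eval x (pderiv 0 examplePoly) = 4 * x 0 ^ 3 + 2 * (x 0 * x 1 - 1) * x 1 := by
  simp [pderiv_X]
  ring

@[simp] lemma eval_pderiv_one_examplePoly (x : Fin 2 → ℂ) :
    eval x (pderiv 1 examplePoly) = 2 * (x 0 * x 1 - 1) * x 0 := by
  simp [pderiv_X]
  ring

section sequences

variable {a b : ℕ → ℂ} {c : ℂ}

lemma tendsto_mul_sub_one_of_euler
    (hf : Tendsto (fun t => a t ^ 4 + (a t * b t - 1) ^ 2) atTop (𝓝 c))
    (h₀ : Tendsto (fun t => a t * (4 * a t ^ 3 + 2 * (a t * b t - 1) * b t)) atTop (𝓝 0))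
    (h₁ : Tendsto (fun t => b t * (2 * (a t * b t - 1) * a t)) atTop (𝓝 0)) :
    Tendsto (fun t => a t * b t - 1) atTop (𝓝 (-c)) := by
  have := ((h₀.add h₁).div_const 4).sub hf
  rw [add_zero, zero_div, zero_sub] at this
  exact this.congr fun t => by ring

lemma eq_zero_or_eq_one_of_tendsto_mul_sub_one
    (hu : Tendsto (fun t => a t * b t - 1) atTop (𝓝 (-c)))
    (h₁ : Tendsto (fun t => b t * (2 * (a t * b t - 1) * a t)) atTop (𝓝 0)) :
    c = 0 ∨ c = 1 := by
  have hlim : Tendsto (fun t => b t * (2 * (a t * b t - 1) * a t)) atTop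
      (𝓝 (2 * -c * (-c + 1))) :=
    ((hu.const_mul 2).mul (hu.add_const 1)).congr fun t => by ring
  have hc : c * (c - 1) = 0 := by
    linear_combination (1 / 2 : ℂ) * tendsto_nhds_unique hlim h₁
  rcases mul_eq_zero.1 hc with hc | hc
  · exact .inl hc
  · exact .inr (sub_eq_zero.1 hc)

lemma tendsto_sq_zero_of_tendsto_mul_sub_one_neg_one
    (hu : Tendsto (fun t => a t * b t - 1) atTop (𝓝 (-1)))
    (h₀ : Tendsto (fun t => b t * (4 * a t ^ 3 + 2 * (a t * b t - 1) * b t)) atTop (𝓝 0))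
    (h₁ : Tendsto (fun t => a t * (2 * (a t * b t - 1) * a t)) atTop (𝓝 0)) :
    Tendsto (fun t => a t ^ 2) atTop (𝓝 0) ∧ Tendsto (fun t => b t ^ 2) atTop (𝓝 0) := by
  have h2u : Tendsto (fun t => 2 * (a t * b t - 1)) atTop (𝓝 (2 * -1)) := hu.const_mul 2
  have ha : Tendsto (fun t => a t ^ 2) atTop (𝓝 0) :=
    h2u.of_mul_tendsto_ne_zero (by norm_num) (h₁.congr fun t => by ring)
  refine ⟨ha, h2u.of_mul_tendsto_ne_zero (by norm_num) ?_⟩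
  have := h₀.sub ((ha.mul (hu.add_const 1)).const_mul 4)
  rw [neg_add_cancel, mul_zero, mul_zero, sub_zero] at this
  exact this.congr fun t => by ring

end sequences

lemma Kinf1_examplePoly_subset : Kinf1 examplePoly ⊆ {0} := by
  rintro c ⟨x, hN, hf, hG⟩
  have h₀₀ := tendsto_coord_mul_eval_pderiv_zero hG 0 0
  have h₀₁ := tendsto_coord_mul_eval_pderiv_zero hG 0 1
  have h₁₀ := tendsto_coord_mul_eval_pderiv_zero hG 1 0
  have h₁₁ := tendsto_coord_mul_eval_pderiv_zero hG 1 1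
  simp only [eval_examplePoly, eval_pderiv_zero_examplePoly,
    eval_pderiv_one_examplePoly] at hf h₀₀ h₀₁ h₁₀ h₁₁
  have hu := tendsto_mul_sub_one_of_euler hf h₀₀ h₁₁
  rcases eq_zero_or_eq_one_of_tendsto_mul_sub_one hu h₁₁ with rfl | rfl
  · rfl
  obtain ⟨ha, hb⟩ := tendsto_sq_zero_of_tendsto_mul_sub_one_neg_one hu h₁₀ h₀₁
  have hN0 : Tendsto (fun t => eucNorm (x t) ^ 2) atTop (𝓝 0) := by
    simpa [eucNorm_sq, Fin.sum_univ_two] using ha.norm.add hb.norm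
  exact absurd hN0 (not_tendsto_nhds_of_tendsto_atTop ((tendsto_pow_atTop two_ne_zero).comp hN) 0)

lemma zero_mem_Kinf1_examplePoly : (0 : ℂ) ∈ Kinf1 examplePoly := by
  set a : ℕ → ℂ := fun t => 1 / ((t : ℂ) + 1)
  have ha : Tendsto a atTop (𝓝 0) := tendsto_one_div_add_atTop_nhds_zero_nat
  have ha0 : ∀ t, a t ≠ 0 := fun t => one_div_ne_zero (Nat.cast_add_one_ne_zero t)
  refine ⟨fun t => ![a t, (a t)⁻¹], ?_, ?_, ?_⟩
  · exact tendsto_atTop_mono (fun t => norm_le_eucNorm _ 1)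
      (tendsto_norm_inv_nhdsNE_zero_atTop.comp
        (tendsto_nhdsWithin_iff.2 ⟨ha, .of_forall ha0⟩))
  · simpa [ha0] using ha.pow 4
  · refine squeeze_zero (fun _ => mul_nonneg (eucNorm_nonneg _) (eucNorm_nonneg _)) (fun t => ?_)
      (by simpa using ((ha.norm.pow 4).add (ha.norm.pow 2)).const_mul 4)
    calc _ ≤ (∑ k, ‖![a t, (a t)⁻¹] k‖) *
          ∑ k, ‖eval ![a t, (a t)⁻¹] (pderiv k examplePoly)‖ :=
          mul_le_mul (eucNorm_le_sum_norm _) (eucNorm_le_sum_norm _) (eucNorm_nonneg _)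
            (Finset.sum_nonneg fun _ _ => norm_nonneg _)
      _ = 4 * (‖a t‖ ^ 4 + ‖a t‖ ^ 2) := by
        simp [Fin.sum_univ_two, ha0]
        field_simp

/-- the set of asymptotic critical values of
`f = z₁⁴ + (z₁z₂ − 1)² : ℂ² → ℂ` is exactly `{0}`. -/
theorem Kinf_example_eq_zero :
    Kinf1 ((X 0) ^ 4 + (X 0 * X 1 - 1) ^ 2 : MvPolynomial (Fin 2) ℂ) = {0} :=
  Kinf1_examplePoly_subset.antisymm (Set.singleton_subset_iff.2 zero_mem_Kinf1_examplePoly)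
end

section
/- Let f(z_1, z_2) = z_1^2 z_2^2 + 2 z_1 z_2^3 + z_2^4 + z_1^2 + 3 z_1 z_2 + 2 z_2^2, regarded as a real polynomial function on ℝ^2. Then the infimum of f over ℝ^2 equals −1/4, and this infimum is not attained: f(x) > −1/4 for every x ∈ ℝ^2, while for every ε > 0 there exists x ∈ ℝ^2 with f(x) < −1/4 + ε. -/
/-- the infimum over `ℝ²` of
`f = z₁²z₂² + 2z₁z₂³ + z₂⁴ + z₁² + 3z₁z₂ + 2z₂²` equals `−1/4` and is not attained:
`f > −1/4` everywhere, yet `f` takes values below `−1/4 + ε` for every `ε > 0`. -/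
theorem infimum_example :
    (∀ x y : ℝ,
      x ^ 2 * y ^ 2 + 2 * x * y ^ 3 + y ^ 4 + x ^ 2 + 3 * x * y + 2 * y ^ 2 > -(1 / 4)) ∧
    (∀ ε : ℝ, 0 < ε → ∃ x y : ℝ,
      x ^ 2 * y ^ 2 + 2 * x * y ^ 3 + y ^ 4 + x ^ 2 + 3 * x * y + 2 * y ^ 2 < -(1 / 4) + ε) ∧
    IsGLB { v : ℝ | ∃ x y : ℝ,
        v = x ^ 2 * y ^ 2 + 2 * x * y ^ 3 + y ^ 4 + x ^ 2 + 3 * x * y + 2 * y ^ 2 }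
      (-(1 / 4)) := by
  have key : ∀ x y : ℝ,
      x ^ 2 * y ^ 2 + 2 * x * y ^ 3 + y ^ 4 + x ^ 2 + 3 * x * y + 2 * y ^ 2 =
      (x * y + y ^ 2 + 1 / 2) ^ 2 + (x + y) ^ 2 - 1 / 4 := by
    intro x y; ring
  have h1 : ∀ x y : ℝ,
      x ^ 2 * y ^ 2 + 2 * x * y ^ 3 + y ^ 4 + x ^ 2 + 3 * x * y + 2 * y ^ 2 > -(1 / 4) := by
    intro x y
    rw [key]
    rcases eq_or_ne (x + y) 0 with h | h
    · have : x * y + y ^ 2 = y * (x + y) := by ring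
      rw [h, mul_zero] at this
      rw [this]
      nlinarith [sq_nonneg (x + y)]
    · nlinarith [sq_nonneg (x * y + y ^ 2 + 1 / 2), pow_pos (abs_pos.2 h) 2, sq_abs (x + y)]
  have h2 : ∀ ε : ℝ, 0 < ε → ∃ x y : ℝ,
      x ^ 2 * y ^ 2 + 2 * x * y ^ 3 + y ^ 4 + x ^ 2 + 3 * x * y + 2 * y ^ 2 < -(1 / 4) + ε := by
    intro ε hε
    set t : ℝ := Real.sqrt ε / 2 with ht
    have htpos : 0 < t := by positivity
    refine ⟨1 / (2 * t) + t, -(1 / (2 * t)), ?_⟩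
    have ht2 : t ^ 2 = ε / 4 := by
      rw [ht]; rw [div_pow, Real.sq_sqrt hε.le]; ring
    have hne : (2 * t) ≠ 0 := by positivity
    rw [key]
    have e1 : (1 / (2 * t) + t) * (-(1 / (2 * t))) + (-(1 / (2 * t))) ^ 2 + 1 / 2 = 0 := by
      field_simp
      ring
    have e2 : (1 / (2 * t) + t + -(1 / (2 * t))) = t := by ring
    rw [e1, e2]
    nlinarith
  refine ⟨h1, h2, ?_, ?_⟩
  · rintro v ⟨x, y, rfl⟩
    exact (h1 x y).le
  · intro b hb
    by_contra hlt
    push_neg at hlt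
    obtain ⟨x, y, hxy⟩ := h2 (b - (-(1 / 4))) (by linarith)
    have : b ≤ x ^ 2 * y ^ 2 + 2 * x * y ^ 3 + y ^ 4 + x ^ 2 + 3 * x * y + 2 * y ^ 2 :=
      hb ⟨x, y, rfl⟩
    linarith
end

section
/- Let f = (f_1,…,f_p) with f_i ∈ ℂ[z_1,…,z_n] be a polynomial mapping ℂ^n → ℂ^p. For a linear map A : ℂ^n → ℂ^p define the Rabier function ν(A) = inf_{‖φ‖=1} ‖A*φ‖, where A* is the adjoint of A and the infimum is over φ ∈ ℂ^p of norm 1. Then the Kuo-distance and Rabier-function definitions of asymptotic critical values coincide: for every c ∈ ℂ^p, there exists a sequence (x_t)_{t∈ℕ} in ℂ^n with ‖x_t‖ → ∞, f(x_t) → c and ‖x_t‖·κ(df(x_t)) → 0 if and only if there exists a sequence (y_t)_{t∈ℕ} in ℂ^n with ‖y_t‖ → ∞, f(y_t) → c and ‖y_t‖·ν(df(y_t)) → 0. -/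
open MvPolynomial Filter

/-- The differential of `f_j` at `x` applied to `v`. -/
noncomputable def pdiff {n p : ℕ} (f : Fin p → MvPolynomial (Fin n) ℂ)
    (x : Fin n → ℂ) (j : Fin p) (v : Fin n → ℂ) : ℂ :=
  ∑ k, MvPolynomial.eval x (MvPolynomial.pderiv k (f j)) * v k

/-- Operator norm of `w_j(x)`, the restriction of `df_j(x)` to the kernel of
`v ↦ (df_i(x) v)_{i ≠ j}`. -/
noncomputable def wNorm {n p : ℕ} (f : Fin p → MvPolynomial (Fin n) ℂ)
    (x : Fin n → ℂ) (j : Fin p) : ℝ :=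
  sSup { r : ℝ | ∃ v : Fin n → ℂ,
    (∀ i : Fin p, i ≠ j → pdiff f x i v = 0) ∧ eucNorm v ≤ 1 ∧ r = ‖pdiff f x j v‖ }

/-- The Kuo distance `κ(df(x)) = min_{1 ≤ j ≤ p} ‖w_j(x)‖`. -/
noncomputable def kuoDist {n p : ℕ} (f : Fin p → MvPolynomial (Fin n) ℂ)
    (x : Fin n → ℂ) : ℝ :=
  ⨅ j : Fin p, wNorm f x j

/-- The set of asymptotic critical values of the polynomial map `f : ℂ^n → ℂ^p`. -/
def Kinf {n p : ℕ} (f : Fin p → MvPolynomial (Fin n) ℂ) : Set (Fin p → ℂ) :=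
  { c | ∃ x : ℕ → (Fin n → ℂ),
      Tendsto (fun t => eucNorm (x t)) atTop atTop ∧
      Tendsto (fun t j => MvPolynomial.eval (x t) (f j)) atTop (nhds c) ∧
      Tendsto (fun t => eucNorm (x t) * kuoDist f (x t)) atTop (nhds 0) }

/-- The Rabier function `ν(df(x)) = inf_{‖φ‖=1} ‖(df(x))* φ‖`, where the adjoint is
taken with respect to the standard Hermitian inner products:
`((df(x))* φ)_k = Σ_j conj(∂f_j/∂z_k (x)) · φ_j`. -/
noncomputable def rabier {n p : ℕ} (f : Fin p → MvPolynomial (Fin n) ℂ)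
    (x : Fin n → ℂ) : ℝ :=
  sInf { r : ℝ | ∃ φ : Fin p → ℂ, eucNorm φ = 1 ∧
    r = eucNorm (fun k =>
      ∑ j, (starRingEnd ℂ) (MvPolynomial.eval x (MvPolynomial.pderiv k (f j))) * φ j) }

/-! Both quantities only see the conjugate gradients `g j` of the components of `f` at `x`,
and `ν ≤ κ ≤ √p ν`, so `‖x‖ κ` and `‖x‖ ν` tend to zero along the same sequences.

For `ν ≤ ‖w_j‖`: the component `u` of `g j` orthogonal to the other gradients satisfies
`‖u‖² = |⟪g j, u⟫| ≤ ‖w_j‖ ‖u‖`, and `u = ∑ φ i • g i` with `φ j = 1`, so `ν ≤ ‖u‖ / ‖φ‖ ≤ ‖u‖`.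
For `κ ≤ √p ν`: given a unit vector `φ`, choose `j` with `|φ j|` maximal, so `1 ≤ √p |φ j|`;
on the common kernel of the other differentials `⟪∑ φ i • g i, v⟫ = conj (φ j) ⟪g j, v⟫`,
whence `|φ j| ‖w_j‖ ≤ ‖∑ φ i • g i‖`. -/

open Finset InnerProductSpace

theorem EuclideanSpace.exists_norm_le_sqrt_card_mul_norm_apply {𝕜 ι : Type*} [RCLike 𝕜]
    [Fintype ι] [Nonempty ι] (φ : EuclideanSpace 𝕜 ι) :
    ∃ j, ‖φ‖ ≤ √(Fintype.card ι) * ‖φ j‖ := by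
  obtain ⟨j, hj⟩ := Finite.exists_max fun i => ‖φ i‖
  refine ⟨j, ?_⟩
  calc ‖φ‖ = √(∑ i, ‖φ i‖ ^ 2) := EuclideanSpace.norm_eq φ
    _ ≤ √(∑ _i : ι, ‖φ j‖ ^ 2) :=
        Real.sqrt_le_sqrt <| sum_le_sum fun i _ => pow_le_pow_left₀ (norm_nonneg _) (hj i) 2
    _ = √(Fintype.card ι) * ‖φ j‖ := by
        rw [sum_const, card_univ, nsmul_eq_mul, Real.sqrt_mul (Nat.cast_nonneg _),
          Real.sqrt_sq (norm_nonneg _)]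

section

variable {E ι : Type*} [NormedAddCommGroup E]

noncomputable def restrictedNorm (𝕜 : Type*) [RCLike 𝕜] [InnerProductSpace 𝕜 E] (g : ι → E)
    (j : ι) : ℝ :=
  sSup {r : ℝ | ∃ v : E, (∀ i, i ≠ j → ⟪g i, v⟫_𝕜 = 0) ∧ ‖v‖ ≤ 1 ∧ r = ‖⟪g j, v⟫_𝕜‖}

noncomputable def infUnitCombNorm (𝕜 : Type*) [RCLike 𝕜] [InnerProductSpace 𝕜 E] [Fintype ι]
    (g : ι → E) : ℝ :=
  sInf {r : ℝ | ∃ φ : EuclideanSpace 𝕜 ι, ‖φ‖ = 1 ∧ r = ‖∑ i, φ i • g i‖}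

variable {𝕜 : Type*} [RCLike 𝕜] [InnerProductSpace 𝕜 E] (g : ι → E)

theorem norm_inner_le_restrictedNorm {j : ι} {v : E} (hv : ∀ i, i ≠ j → ⟪g i, v⟫_𝕜 = 0)
    (hv₁ : ‖v‖ ≤ 1) : ‖⟪g j, v⟫_𝕜‖ ≤ restrictedNorm 𝕜 g j := by
  refine le_csSup ⟨‖g j‖, ?_⟩ ⟨v, hv, hv₁, rfl⟩
  rintro _ ⟨w, -, hw₁, rfl⟩
  calc ‖⟪g j, w⟫_𝕜‖ ≤ ‖g j‖ * ‖w‖ := norm_inner_le_norm _ _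
    _ ≤ ‖g j‖ := mul_le_of_le_one_right (norm_nonneg _) hw₁

theorem restrictedNorm_nonneg (j : ι) : 0 ≤ restrictedNorm 𝕜 g j := by
  simpa using norm_inner_le_restrictedNorm (𝕜 := 𝕜) g (j := j) (v := 0) (by simp) (by simp)

theorem norm_inner_le_restrictedNorm_mul {j : ι} {v : E} (hv : ∀ i, i ≠ j → ⟪g i, v⟫_𝕜 = 0) :
    ‖⟪g j, v⟫_𝕜‖ ≤ restrictedNorm 𝕜 g j * ‖v‖ := by
  rcases eq_or_ne v 0 with rfl | hv₀
  · simp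
  have hunit := norm_inner_le_restrictedNorm g (v := (‖v‖⁻¹ : 𝕜) • v)
    (fun i hi => by rw [inner_smul_right, hv i hi, mul_zero]) (norm_smul_inv_norm hv₀).le
  rwa [inner_smul_right, norm_mul, norm_inv, RCLike.norm_ofReal, abs_norm,
    inv_mul_le_iff₀ (norm_pos_iff.mpr hv₀), mul_comm] at hunit

variable [Fintype ι]

theorem norm_apply_mul_restrictedNorm_le (φ : ι → 𝕜) (j : ι) :
    ‖φ j‖ * restrictedNorm 𝕜 g j ≤ ‖∑ i, φ i • g i‖ := by
  rcases eq_or_ne (φ j) 0 with hj | hj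
  · simp [hj]
  rw [← le_div_iff₀' (norm_pos_iff.mpr hj)]
  refine csSup_le ⟨0, 0, by simp, by simp, by simp⟩ ?_
  rintro _ ⟨v, hv, hv₁, rfl⟩
  rw [le_div_iff₀' (norm_pos_iff.mpr hj)]
  have hcomb : ⟪∑ i, φ i • g i, v⟫_𝕜 = starRingEnd 𝕜 (φ j) * ⟪g j, v⟫_𝕜 := by
    rw [sum_inner, sum_eq_single j (fun i _ hi => by rw [inner_smul_left, hv i hi, mul_zero])
      (by simp), inner_smul_left]
  calc ‖φ j‖ * ‖⟪g j, v⟫_𝕜‖ = ‖⟪∑ i, φ i • g i, v⟫_𝕜‖ := by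
        rw [hcomb, norm_mul, RCLike.norm_conj]
    _ ≤ ‖∑ i, φ i • g i‖ * ‖v‖ := norm_inner_le_norm _ _
    _ ≤ ‖∑ i, φ i • g i‖ := mul_le_of_le_one_right (norm_nonneg _) hv₁

theorem infUnitCombNorm_nonneg : 0 ≤ infUnitCombNorm 𝕜 g :=
  Real.sInf_nonneg <| by rintro _ ⟨φ, -, rfl⟩; exact norm_nonneg _

theorem infUnitCombNorm_mul_norm_le (φ : EuclideanSpace 𝕜 ι) :
    infUnitCombNorm 𝕜 g * ‖φ‖ ≤ ‖∑ i, φ i • g i‖ := by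
  rcases eq_or_ne φ 0 with rfl | hφ
  · simp
  rw [← le_div_iff₀ (norm_pos_iff.mpr hφ)]
  refine csInf_le ⟨0, by rintro _ ⟨ψ, -, rfl⟩; exact norm_nonneg _⟩
    ⟨(‖φ‖⁻¹ : 𝕜) • φ, norm_smul_inv_norm hφ, ?_⟩
  simp only [PiLp.smul_apply, smul_eq_mul, mul_smul, ← smul_sum, norm_smul, norm_inv,
    RCLike.norm_ofReal, abs_norm]
  rw [div_eq_inv_mul]

theorem infUnitCombNorm_of_isEmpty [IsEmpty ι] : infUnitCombNorm 𝕜 g = 0 := by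
  rw [infUnitCombNorm, Set.eq_empty_of_forall_notMem (s := {r : ℝ | _}), Real.sInf_empty]
  rintro _ ⟨φ, hφ, -⟩
  simp [Subsingleton.elim φ 0] at hφ

variable [DecidableEq ι]

theorem exists_apply_eq_one_sum_smul_eq_sub {j : ι} {w : E}
    (hw : w ∈ Submodule.span 𝕜 (g '' ↑(univ.erase j))) :
    ∃ φ : ι → 𝕜, φ j = 1 ∧ ∑ i, φ i • g i = g j - w := by
  obtain ⟨c, rfl⟩ := (Submodule.mem_span_image_finset_iff_exists_fun' 𝕜).mp hw
  refine ⟨Function.update (-c) j 1, by simp, ?_⟩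
  rw [← add_sum_erase _ _ (mem_univ j), Function.update_self, one_smul, sub_eq_add_neg,
    ← sum_neg_distrib]
  congr 1
  refine sum_congr rfl fun i hi => ?_
  rw [Function.update_of_ne (ne_of_mem_erase hi), Pi.neg_apply, neg_smul]

theorem infUnitCombNorm_le_restrictedNorm (j : ι) :
    infUnitCombNorm 𝕜 g ≤ restrictedNorm 𝕜 g j := by
  let V := Submodule.span 𝕜 (g '' ↑(univ.erase j))
  have : FiniteDimensional 𝕜 V :=
    FiniteDimensional.span_of_finite 𝕜 ((univ.erase j).finite_toSet.image g)
  set u := g j - V.starProjection (g j) with hu_def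
  have hu : u ∈ Vᗮ := V.sub_starProjection_mem_orthogonal (g j)
  have hu_ne : ∀ i, i ≠ j → ⟪g i, u⟫_𝕜 = 0 := fun i hi =>
    Submodule.inner_right_of_mem_orthogonal
      (Submodule.subset_span (Set.mem_image_of_mem g (by simpa using hi))) hu
  have hu_le : ‖u‖ ≤ restrictedNorm 𝕜 g j := by
    have hgu : ⟪g j, u⟫_𝕜 = ⟪u, u⟫_𝕜 := by
      rw [show g j = V.starProjection (g j) + u by rw [hu_def]; abel, inner_add_left,
        Submodule.inner_right_of_mem_orthogonal (V.starProjection_apply_mem _) hu, zero_add]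
    have hbound := norm_inner_le_restrictedNorm_mul g hu_ne
    rw [hgu, inner_self_eq_norm_sq_to_K, norm_pow, RCLike.norm_ofReal, abs_norm, sq] at hbound
    nlinarith [restrictedNorm_nonneg (𝕜 := 𝕜) g j, norm_nonneg u]
  obtain ⟨φ, hφj, hφ⟩ := exists_apply_eq_one_sum_smul_eq_sub g (V.starProjection_apply_mem (g j))
  have hφ₁ : 1 ≤ ‖WithLp.toLp 2 φ‖ := by
    simpa [hφj] using PiLp.norm_apply_le (WithLp.toLp 2 φ) j
  calc infUnitCombNorm 𝕜 g ≤ infUnitCombNorm 𝕜 g * ‖WithLp.toLp 2 φ‖ :=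
        le_mul_of_one_le_right (infUnitCombNorm_nonneg g) hφ₁
    _ ≤ ‖u‖ := by simpa [hφ] using infUnitCombNorm_mul_norm_le g (WithLp.toLp 2 φ)
    _ ≤ restrictedNorm 𝕜 g j := hu_le

theorem infUnitCombNorm_le_iInf_restrictedNorm :
    infUnitCombNorm 𝕜 g ≤ ⨅ j, restrictedNorm 𝕜 g j := by
  cases isEmpty_or_nonempty ι
  · rw [infUnitCombNorm_of_isEmpty, Real.iInf_of_isEmpty]
  · exact le_ciInf (infUnitCombNorm_le_restrictedNorm g)

theorem iInf_restrictedNorm_le_sqrt_card_mul_infUnitCombNorm :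
    ⨅ j, restrictedNorm 𝕜 g j ≤ √(Fintype.card ι) * infUnitCombNorm 𝕜 g := by
  cases isEmpty_or_nonempty ι
  · simp [Real.iInf_of_isEmpty]
  inhabit ι
  rw [infUnitCombNorm, ← smul_eq_mul, ← Real.sInf_smul_of_nonneg (Real.sqrt_nonneg _)]
  refine le_csInf (Set.smul_set_nonempty.mpr ⟨_, EuclideanSpace.single default 1, by simp, rfl⟩) ?_
  rintro _ ⟨_, ⟨φ, hφ, rfl⟩, rfl⟩
  obtain ⟨j, hj⟩ := EuclideanSpace.exists_norm_le_sqrt_card_mul_norm_apply φ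
  calc ⨅ j, restrictedNorm 𝕜 g j ≤ restrictedNorm 𝕜 g j :=
        ciInf_le ⟨0, by rintro _ ⟨i, rfl⟩; exact restrictedNorm_nonneg g i⟩ j
    _ ≤ (√(Fintype.card ι) * ‖φ j‖) * restrictedNorm 𝕜 g j :=
        le_mul_of_one_le_left (restrictedNorm_nonneg g j) (hφ ▸ hj)
    _ ≤ √(Fintype.card ι) • ‖∑ i, φ i • g i‖ := by
        rw [mul_assoc, smul_eq_mul]
        exact mul_le_mul_of_nonneg_left (norm_apply_mul_restrictedNorm_le g φ j)
          (Real.sqrt_nonneg _)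

end

theorem eucNorm_eq_norm_toLp {m : ℕ} (v : Fin m → ℂ) : eucNorm v = ‖WithLp.toLp 2 v‖ := by
  simp [eucNorm, EuclideanSpace.norm_eq]

section Gradient

variable {n p : ℕ} (f : Fin p → MvPolynomial (Fin n) ℂ) (x : Fin n → ℂ)

noncomputable def conjGradient (j : Fin p) : EuclideanSpace ℂ (Fin n) :=
  WithLp.toLp 2 fun k => starRingEnd ℂ (eval x (pderiv k (f j)))

theorem pdiff_eq_inner (j : Fin p) (v : Fin n → ℂ) :
    pdiff f x j v = ⟪conjGradient f x j, WithLp.toLp 2 v⟫_ℂ := by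
  simp [pdiff, conjGradient, PiLp.inner_apply, mul_comm]

theorem sum_smul_conjGradient (φ : Fin p → ℂ) :
    ∑ j, φ j • conjGradient f x j =
      WithLp.toLp 2 fun k => ∑ j, starRingEnd ℂ (eval x (pderiv k (f j))) * φ j := by
  ext k
  simp [conjGradient, mul_comm]

theorem wNorm_eq_restrictedNorm (j : Fin p) :
    wNorm f x j = restrictedNorm ℂ (conjGradient f x) j := by
  simp only [wNorm, restrictedNorm, pdiff_eq_inner, eucNorm_eq_norm_toLp]
  congr 1
  ext r
  exact ⟨fun ⟨v, hv⟩ => ⟨_, hv⟩, fun ⟨v, hv⟩ => ⟨v.ofLp, hv⟩⟩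

theorem rabier_eq_infUnitCombNorm : rabier f x = infUnitCombNorm ℂ (conjGradient f x) := by
  simp only [rabier, infUnitCombNorm, ← sum_smul_conjGradient, eucNorm_eq_norm_toLp]
  congr 1
  ext r
  exact ⟨fun ⟨φ, hφ⟩ => ⟨_, hφ⟩, fun ⟨φ, hφ⟩ => ⟨φ.ofLp, hφ⟩⟩

theorem rabier_nonneg : 0 ≤ rabier f x :=
  rabier_eq_infUnitCombNorm f x ▸ infUnitCombNorm_nonneg _

theorem rabier_le_kuoDist : rabier f x ≤ kuoDist f x := by
  simpa only [rabier_eq_infUnitCombNorm, kuoDist, wNorm_eq_restrictedNorm]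
    using infUnitCombNorm_le_iInf_restrictedNorm (conjGradient f x)

theorem kuoDist_le_sqrt_mul_rabier : kuoDist f x ≤ √p * rabier f x := by
  simpa only [rabier_eq_infUnitCombNorm, kuoDist, wNorm_eq_restrictedNorm, Fintype.card_fin]
    using iInf_restrictedNorm_le_sqrt_card_mul_infUnitCombNorm (conjGradient f x)

end Gradient

theorem tendsto_zero_iff_of_le_of_le_mul {α : Type*} {l : Filter α} {a b : α → ℝ} (C : ℝ)
    (ha : ∀ t, 0 ≤ a t) (hab : ∀ t, a t ≤ b t) (hba : ∀ t, b t ≤ C * a t) :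
    Tendsto a l (nhds 0) ↔ Tendsto b l (nhds 0) := by
  refine ⟨fun h => squeeze_zero (fun t => (ha t).trans (hab t)) hba ?_,
    fun h => squeeze_zero ha hab h⟩
  simpa using h.const_mul C

theorem kuo_rabier_acv_equiv_general {n p : ℕ}
    (f : Fin p → MvPolynomial (Fin n) ℂ) (c : Fin p → ℂ) :
    (∃ x : ℕ → (Fin n → ℂ),
        Tendsto (fun t => eucNorm (x t)) atTop atTop ∧
        Tendsto (fun t j => MvPolynomial.eval (x t) (f j)) atTop (nhds c) ∧
        Tendsto (fun t => eucNorm (x t) * kuoDist f (x t)) atTop (nhds 0)) ↔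
    (∃ y : ℕ → (Fin n → ℂ),
        Tendsto (fun t => eucNorm (y t)) atTop atTop ∧
        Tendsto (fun t j => MvPolynomial.eval (y t) (f j)) atTop (nhds c) ∧
        Tendsto (fun t => eucNorm (y t) * rabier f (y t)) atTop (nhds 0)) := by
  refine exists_congr fun x => and_congr_right fun _ => and_congr_right fun _ => ?_
  have hx : ∀ t, 0 ≤ eucNorm (x t) := fun t => Real.sqrt_nonneg _
  refine (tendsto_zero_iff_of_le_of_le_mul √p (fun t => ?_) (fun t => ?_) (fun t => ?_)).symm
  · exact mul_nonneg (hx t) (rabier_nonneg f (x t))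
  · exact mul_le_mul_of_nonneg_left (rabier_le_kuoDist f (x t)) (hx t)
  · rw [mul_left_comm]
    exact mul_le_mul_of_nonneg_left (kuoDist_le_sqrt_mul_rabier f (x t)) (hx t)

/-- the Kuo-distance and Rabier-function definitions of asymptotic
critical values coincide. -/
theorem kuo_rabier_acv_equiv {n p : ℕ} (hp : 1 ≤ p)
    (f : Fin p → MvPolynomial (Fin n) ℂ) (c : Fin p → ℂ) :
    (∃ x : ℕ → (Fin n → ℂ),
        Tendsto (fun t => eucNorm (x t)) atTop atTop ∧
        Tendsto (fun t j => MvPolynomial.eval (x t) (f j)) atTop (nhds c) ∧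
        Tendsto (fun t => eucNorm (x t) * kuoDist f (x t)) atTop (nhds 0)) ↔
    (∃ y : ℕ → (Fin n → ℂ),
        Tendsto (fun t => eucNorm (y t)) atTop atTop ∧
        Tendsto (fun t j => MvPolynomial.eval (y t) (f j)) atTop (nhds c) ∧
        Tendsto (fun t => eucNorm (y t) * rabier f (y t)) atTop (nhds 0)) :=
  kuo_rabier_acv_equiv_general f c
end
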